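/- Let f, g_1, ..., g_r be real polynomials in d variables with f = g_1^2 + ... + g_r^2 and f ≠ 0. Then for every i with g_i ≠ 0, the Newton polytope of g_i is contained in (1/2)·N(f), i.e., N(g_i) ⊆ { v/2 | v ∈ N(f) }. -/

import Mathlib

/-!
Let `P` be the convex hull of the exponents of all the `gₖ`. If `α` is a vertex of `P`, then `α + α`
cannot be written as `β + γ` with `β, γ` exponents of some `gₖ` other than `β = γ = α`, so the
coefficient of `X^(2α)` in `f` is `∑ₖ coeff_α(gₖ)² > 0`. Hence every vertex of `P` lies in `½ N(f)`,
and by Krein–Milman so does `P ⊇ N(gᵢ)`.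
-/

open MvPolynomial

/-- The Newton polytope of a polynomial: the convex hull in `ℝ^d` of its support. -/
noncomputable def newtonPolytope {d : ℕ} (f : MvPolynomial (Fin d) ℝ) :
    Set (Fin d → ℝ) :=
  convexHull ℝ ((fun α : Fin d →₀ ℕ => fun i => (α i : ℝ)) '' ↑f.support)

open scoped Pointwise

theorem eq_of_mem_extremePoints_of_add_eq_add_self {𝕜 E : Type*} [Field 𝕜] [LinearOrder 𝕜]
    [IsStrictOrderedRing 𝕜] [AddCommGroup E] [Module 𝕜 E] {A : Set E} {x y z : E}
    (hx : x ∈ A.extremePoints 𝕜) (hy : y ∈ A) (hz : z ∈ A) (h : y + z = x + x) : y = x := by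
  refine hx.2 hy hz ⟨1 / 2, 1 / 2, by norm_num, by norm_num, by norm_num, ?_⟩
  rw [← smul_add, h, ← two_smul 𝕜 x, smul_smul]
  norm_num

theorem Convex.subset_of_extremePoints_subset {E : Type*} [AddCommGroup E] [Module ℝ E]
    [TopologicalSpace E] [T2Space E] [IsTopologicalAddGroup E] [ContinuousSMul ℝ E]
    [LocallyConvexSpace ℝ E] {s t : Set E} (hs : IsCompact s) (hsc : Convex ℝ s)
    (ht : IsClosed t) (htc : Convex ℝ t) (h : s.extremePoints ℝ ⊆ t) : s ⊆ t := by
  rw [← closure_convexHull_extremePoints hs hsc]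
  exact closure_minimal (convexHull_min h htc) ht

namespace MvPolynomial

variable {σ R : Type*}

theorem coeff_add_self_sq [CommSemiring R] {p : MvPolynomial σ R} {α : σ →₀ ℕ}
    (hα : ∀ β ∈ p.support, ∀ γ ∈ p.support, β + γ = α + α → β = α) :
    coeff (α + α) (p ^ 2) = coeff α p ^ 2 := by
  classical
  rw [sq, coeff_mul, Finset.sum_eq_single (α, α), sq]
  · rintro ⟨β, γ⟩ hβγ hne
    rw [Finset.HasAntidiagonal.mem_antidiagonal] at hβγ
    by_contra hprod
    have hβ : β ∈ p.support := mem_support_iff.2 (left_ne_zero_of_mul hprod)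
    have hγ : γ ∈ p.support := mem_support_iff.2 (right_ne_zero_of_mul hprod)
    obtain rfl := hα β hβ γ hγ hβγ
    exact hne (Prod.ext rfl (add_left_cancel hβγ))
  · simp

/-- `newtonPolytope p` unfolds to `convexHull ℝ (exponentVector '' p.support)`. -/
def exponentVector (α : σ →₀ ℕ) : σ → ℝ := fun i => α i

theorem exponentVector_injective : Function.Injective (exponentVector (σ := σ)) :=
  fun α β h => Finsupp.ext fun i => by simpa [exponentVector] using congrFun h i

theorem exponentVector_add (α β : σ →₀ ℕ) :
    exponentVector (α + β) = exponentVector α + exponentVector β := by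
  ext i; simp [exponentVector]

theorem coeff_add_self_sq_of_mem_extremePoints [CommSemiring R] {p : MvPolynomial σ R}
    {α : σ →₀ ℕ} {A : Set (σ → ℝ)} (hA : exponentVector '' p.support ⊆ A)
    (hα : exponentVector α ∈ A.extremePoints ℝ) :
    coeff (α + α) (p ^ 2) = coeff α p ^ 2 :=
  coeff_add_self_sq fun β hβ γ hγ h => exponentVector_injective <|
    eq_of_mem_extremePoints_of_add_eq_add_self hα (hA ⟨β, hβ, rfl⟩) (hA ⟨γ, hγ, rfl⟩) <| by
      rw [← exponentVector_add, ← exponentVector_add, h]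

theorem add_self_mem_support_sum_sq [CommRing R] [LinearOrder R] [IsStrictOrderedRing R]
    {ι : Type*} [Fintype ι] {g : ι → MvPolynomial σ R} {α : σ →₀ ℕ} {A : Set (σ → ℝ)}
    (hA : ∀ k, exponentVector '' (g k).support ⊆ A)
    (hα : exponentVector α ∈ A.extremePoints ℝ) {j : ι} (hj : α ∈ (g j).support) :
    α + α ∈ (∑ k, g k ^ 2).support := by
  rw [mem_support_iff, coeff_sum]
  simp only [coeff_add_self_sq_of_mem_extremePoints (hA _) hα]
  refine (Finset.sum_pos' (fun k _ => sq_nonneg _) ⟨j, Finset.mem_univ j, ?_⟩).ne'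
  exact sq_pos_of_ne_zero (mem_support_iff.1 hj)

end MvPolynomial

theorem isCompact_newtonPolytope {d : ℕ} (f : MvPolynomial (Fin d) ℝ) :
    IsCompact (newtonPolytope f) :=
  (f.support.finite_toSet.image _).isCompact_convexHull ℝ

theorem newtonPolytope_of_sos_general {d r : ℕ} (f : MvPolynomial (Fin d) ℝ)
    (g : Fin r → MvPolynomial (Fin d) ℝ)
    (hf : f = ∑ i : Fin r, (g i) ^ 2) :
    ∀ i : Fin r, g i ≠ 0 →
      newtonPolytope (g i) ⊆ (fun v => ((1 : ℝ) / 2) • v) '' newtonPolytope f := by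
  intro i _
  set S := ⋃ k, exponentVector '' ((g k).support : Set (Fin d →₀ ℕ))
  have hgS : newtonPolytope (g i) ⊆ convexHull ℝ S :=
    convexHull_mono (Set.subset_iUnion_of_subset i subset_rfl)
  have hext : (convexHull ℝ S).extremePoints ℝ ⊆ ((1 : ℝ) / 2) • newtonPolytope f := by
    intro x hx
    obtain ⟨k, α, hα, rfl⟩ := Set.mem_iUnion.1 (extremePoints_convexHull_subset hx)
    have h2α : α + α ∈ f.support := hf ▸ add_self_mem_support_sum_sq
      (fun k => (Set.subset_iUnion _ k).trans (subset_convexHull ℝ S)) hx hα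
    refine ⟨exponentVector (α + α), subset_convexHull ℝ _ ⟨_, h2α, rfl⟩, ?_⟩
    show ((1 : ℝ) / 2) • exponentVector (α + α) = exponentVector α
    rw [exponentVector_add, ← two_smul ℝ, smul_smul]
    norm_num
  have hScompact : IsCompact (convexHull ℝ S) :=
    (Set.finite_iUnion fun k => (g k).support.finite_toSet.image _).isCompact_convexHull ℝ
  refine hgS.trans <| Convex.subset_of_extremePoints_subset hScompact (convex_convexHull ℝ S)
    ?_ ((convex_convexHull ℝ _).smul _) hext
  exact ((isCompact_newtonPolytope f).image (continuous_const_smul _)).isClosed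

/-- If `f = g₁² + ⋯ + g_r²` and `f ≠ 0`, then the Newton polytope of each nonzero `gᵢ`
is contained in `(1/2)·N(f)`. -/
theorem newtonPolytope_of_sos {d r : ℕ} (f : MvPolynomial (Fin d) ℝ)
    (g : Fin r → MvPolynomial (Fin d) ℝ)
    (hf : f = ∑ i : Fin r, (g i) ^ 2) (hf0 : f ≠ 0) :
    ∀ i : Fin r, g i ≠ 0 →
      newtonPolytope (g i) ⊆ (fun v => ((1 : ℝ) / 2) • v) '' newtonPolytope f :=
  newtonPolytope_of_sos_general f g hf
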